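/- arXiv:1607.04084 — 5 statements merged into one kernel-verified Lean document; each statement's English description precedes it below -/
import Mathlib

section
/- The function g(θ) = θ(e^θ−1)(e^θ(θ−1)+1) / (2(p−1)(e^{2θ} − e^θ(θ²+2) + 1)) − θ/2 satisfies lim_{θ→0} g(θ) = 3/(p−1). -/
/-!
Numerator and denominator of the fraction both vanish to fourth order at `0`: Taylor expansion
of `exp` with an `O(θ⁵)` remainder gives `θ (e^θ - 1) (e^θ (θ - 1) + 1) = θ⁴/2 + O(θ⁵)` and
`e^{2θ} - e^θ (θ² + 2) + 1 = θ⁴/12 + O(θ⁵)`. Hence the fraction tends to `6`, and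
`g(θ) → 6 / (2 (p - 1))`.
-/

open Real Filter

open Topology Asymptotics Finset Nat

theorem tendsto_div_pow_of_isBigO_sub_mul_pow {𝕜 : Type*} [NormedField 𝕜] {f : 𝕜 → 𝕜} {c : 𝕜}
    {n : ℕ} (h : (fun x => f x - c * x ^ n) =O[𝓝 0] (· ^ (n + 1))) :
    Tendsto (fun x => f x / x ^ n) (𝓝[≠] 0) (𝓝 c) := by
  have hquot : (fun x => f x / x ^ n - c) =O[𝓝[≠] 0] id := by
    refine ((h.mono nhdsWithin_le_nhds).mul (isBigO_refl (fun x : 𝕜 => (x ^ n)⁻¹) _)).congr'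
      ?_ ?_ <;> filter_upwards [self_mem_nhdsWithin] with x (hx : x ≠ 0)
    · field_simp
    · rw [id, pow_succ]; field_simp
  exact tendsto_sub_nhds_zero_iff.mp <|
    hquot.trans_tendsto (tendsto_nhdsWithin_of_tendsto_nhds tendsto_id)

theorem Asymptotics.IsBigO.mul_tendsto {α 𝕜 : Type*} [NormedField 𝕜] {l : Filter α}
    {f q g : α → 𝕜} {c : 𝕜} (h : f =O[l] g) (hq : Tendsto q l (𝓝 c)) :
    (fun x => f x * q x) =O[l] g := by
  simpa using h.mul (hq.isBigO_one 𝕜)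

theorem Real.tendsto_exp_sub_one_div :
    Tendsto (fun x => (exp x - 1) / x) (𝓝[≠] 0) (𝓝 1) := by
  have h : (fun x => (exp x - 1) - 1 * x ^ 1) =O[𝓝 0] (· ^ (1 + 1)) := by
    simpa [sum_range_succ, sub_sub] using exp_sub_sum_range_isBigO_pow 2
  simpa using tendsto_div_pow_of_isBigO_sub_mul_pow h

theorem Real.tendsto_exp_mul_sub_one_add_one_div_sq :
    Tendsto (fun x => (exp x * (x - 1) + 1) / x ^ 2) (𝓝[≠] 0) (𝓝 (1 / 2)) := by
  refine tendsto_div_pow_of_isBigO_sub_mul_pow ?_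
  have h := ((exp_sub_sum_range_isBigO_pow 3).mul_tendsto
    ((by fun_prop : Continuous fun x : ℝ => x - 1).tendsto' 0 (-1) (by norm_num))).add
    ((isBigO_refl (· ^ 3) (𝓝 (0 : ℝ))).mul_tendsto (tendsto_const_nhds (x := (1 / 2 : ℝ))))
  refine h.congr_left fun x => ?_
  simp only [sum_range_succ, sum_range_zero]
  norm_num [factorial]
  ring

theorem Real.tendsto_exp_two_mul_sub_exp_mul_sq_add_two_add_one_div_pow_four :
    Tendsto (fun x => (exp (2 * x) - exp x * (x ^ 2 + 2) + 1) / x ^ 4) (𝓝[≠] 0)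
      (𝓝 (1 / 12)) := by
  refine tendsto_div_pow_of_isBigO_sub_mul_pow ?_
  have hR := exp_sub_sum_range_isBigO_pow 5
  have hR2 : (fun x => exp (2 * x) - ∑ i ∈ range 5, (2 * x) ^ i / i !) =O[𝓝 0] (· ^ 5) :=
    (hR.comp_tendsto ((continuous_const.mul continuous_id).tendsto' 0 0 (by simp))).trans
      ((isBigO_const_mul_self (2 ^ 5) (· ^ 5) _).congr_left fun x => by simp [mul_pow])
  -- With `R` the remainder after the Taylor polynomial of degree 4,
  -- `e^{2x} - e^x (x² + 2) + 1 - x⁴/12 = R(2x) - R(x) (x² + 2) + x⁵ (-1/6 - x/24)`.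
  have h := (hR2.sub (hR.mul_tendsto
    ((by fun_prop : Continuous fun x : ℝ => x ^ 2 + 2).tendsto' 0 2 (by norm_num)))).add
    ((isBigO_refl (· ^ 5) (𝓝 (0 : ℝ))).mul_tendsto
      ((by fun_prop : Continuous fun x : ℝ => -(1 / 6) - x / 24).tendsto' 0 (-(1 / 6))
        (by norm_num)))
  refine h.congr_left fun x => ?_
  simp only [sum_range_succ, sum_range_zero]
  norm_num [factorial]
  ring

theorem g_limit_at_zero_general (p : ℕ) :
    Tendsto (fun θ : ℝ =>
        θ * (Real.exp θ - 1) * (Real.exp θ * (θ - 1) + 1) /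
          (2 * ((p : ℝ) - 1) * (Real.exp (2 * θ) - Real.exp θ * (θ ^ 2 + 2) + 1))
        - θ / 2)
      (nhdsWithin 0 {(0:ℝ)}ᶜ) (nhds (3 / ((p : ℝ) - 1))) := by
  have hfrac : Tendsto (fun θ : ℝ => θ * (exp θ - 1) * (exp θ * (θ - 1) + 1) /
      (exp (2 * θ) - exp θ * (θ ^ 2 + 2) + 1)) (𝓝[≠] 0) (𝓝 6) := by
    have h := (tendsto_exp_sub_one_div.mul tendsto_exp_mul_sub_one_add_one_div_sq).div
      tendsto_exp_two_mul_sub_exp_mul_sq_add_two_add_one_div_pow_four (by norm_num)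
    norm_num at h
    refine h.congr' ?_
    filter_upwards [self_mem_nhdsWithin] with θ (hθ : θ ≠ 0)
    have hnum : (exp θ - 1) / θ * ((exp θ * (θ - 1) + 1) / θ ^ 2) =
        θ * (exp θ - 1) * (exp θ * (θ - 1) + 1) / θ ^ 4 := by
      field_simp
    rw [Pi.div_apply, hnum, div_div_div_cancel_right₀ (pow_ne_zero 4 hθ)]
  have h := (hfrac.div_const (2 * ((p : ℝ) - 1))).sub
    (tendsto_nhdsWithin_of_tendsto_nhds
      ((by fun_prop : Continuous fun θ : ℝ => θ / 2).tendsto' 0 0 (by simp)))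
  rw [show 3 / ((p : ℝ) - 1) = 6 / (2 * ((p : ℝ) - 1)) - 0 by rw [sub_zero, ← div_div]; norm_num]
  refine h.congr fun θ => ?_
  rw [div_div, mul_comm (exp (2 * θ) - _ + _)]

/-- The function
`g(θ) = θ(e^θ-1)(e^θ(θ-1)+1) / (2(p-1)(e^{2θ}-e^θ(θ²+2)+1)) - θ/2`
satisfies `lim_{θ→0} g(θ) = 3/(p-1)`. -/
theorem g_limit_at_zero (p : ℕ) (hp : 2 ≤ p) :
    Tendsto (fun θ : ℝ =>
        θ * (Real.exp θ - 1) * (Real.exp θ * (θ - 1) + 1) /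
          (2 * ((p : ℝ) - 1) * (Real.exp (2 * θ) - Real.exp θ * (θ ^ 2 + 2) + 1))
        - θ / 2)
      (nhdsWithin 0 {(0:ℝ)}ᶜ) (nhds (3 / ((p : ℝ) - 1))) :=
  g_limit_at_zero_general p
end

section
/- The derivative of log((e^θ−1)/θ) with respect to θ equals (e^θ(θ−1)+1)/((e^θ−1)θ) for θ ≠ 0, and this expression lies strictly between 0 and 1. -/
open Real

lemma denom_pos (θ : ℝ) (hθ : θ ≠ 0) : 0 < (Real.exp θ - 1) * θ := by
  have h := Real.add_one_lt_exp hθ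
  rcases lt_or_gt_of_ne hθ with h1 | h1
  · have : Real.exp θ < 1 := by rw [Real.exp_lt_one_iff]; exact h1
    exact mul_pos_of_neg_of_neg (by linarith) h1
  · exact mul_pos (by linarith) h1

lemma numer_pos (θ : ℝ) (hθ : θ ≠ 0) : 0 < Real.exp θ * (θ - 1) + 1 := by
  have h := Real.add_one_lt_exp (neg_ne_zero.mpr hθ)
  have hpos := Real.exp_pos θ
  have : Real.exp θ * (-θ + 1) < Real.exp θ * Real.exp (-θ) := by
    exact (mul_lt_mul_iff_right₀ hpos).mpr h
  rw [← Real.exp_add] at this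
  simp at this
  nlinarith

/-- For `θ ≠ 0`, the derivative of `log((e^θ-1)/θ)` equals
`(e^θ(θ-1)+1)/((e^θ-1)θ)`, and this expression lies strictly between 0 and 1. -/
theorem deriv_log_mgf_uniform (θ : ℝ) (hθ : θ ≠ 0) :
    HasDerivAt (fun t : ℝ => Real.log ((Real.exp t - 1) / t))
      ((Real.exp θ * (θ - 1) + 1) / ((Real.exp θ - 1) * θ)) θ ∧
    0 < (Real.exp θ * (θ - 1) + 1) / ((Real.exp θ - 1) * θ) ∧
    (Real.exp θ * (θ - 1) + 1) / ((Real.exp θ - 1) * θ) < 1 := by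
  have hD : 0 < (Real.exp θ - 1) * θ := denom_pos θ hθ
  have hN : 0 < Real.exp θ * (θ - 1) + 1 := numer_pos θ hθ
  have he : Real.exp θ - 1 ≠ 0 := by
    intro h; rw [h, zero_mul] at hD; exact lt_irrefl 0 hD
  refine ⟨?_, div_pos hN hD, ?_⟩
  · have hg : HasDerivAt (fun t : ℝ => (Real.exp t - 1) / t)
        ((Real.exp θ * θ - (Real.exp θ - 1) * 1) / θ ^ 2) θ :=
      HasDerivAt.div ((Real.hasDerivAt_exp θ).sub_const 1) (hasDerivAt_id θ) hθ
    have hne : (Real.exp θ - 1) / θ ≠ 0 := div_ne_zero he hθ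
    have := hg.log hne
    convert this using 1
    field_simp
    ring
  · rw [div_lt_one hD]
    have := Real.add_one_lt_exp hθ
    nlinarith
end

section
/- For θ ≠ 0, the second derivative of log((e^θ−1)/θ) equals (e^{2θ} − e^θ(θ²+2) + 1)/((e^θ−1)²θ²), and this quantity is strictly positive. -/
/-!
The first derivative of `log ((eᵗ - 1) / t)` is `eᵗ / (eᵗ - 1) - 1 / t`, and differentiating once
more gives the stated quotient. Its numerator equals `2 e^θ (cosh θ - 1 - θ² / 2)`, which is
positive because `cosh θ = 1 + 2 sinh² (θ / 2)` and `|sinh x| > |x|` for `x ≠ 0`.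
-/

open Real Filter Topology

namespace Real

lemma exp_sub_one_ne_zero {x : ℝ} (hx : x ≠ 0) : exp x - 1 ≠ 0 :=
  sub_ne_zero.2 (mt (exp_eq_one_iff x).1 hx)

lemma one_add_sq_div_two_lt_cosh {x : ℝ} (hx : x ≠ 0) : 1 + x ^ 2 / 2 < cosh x := by
  have hsinh : |x / 2| < |sinh (x / 2)| := by
    rw [abs_sinh]
    exact self_lt_sinh_iff.2 (abs_pos.2 (div_ne_zero hx two_ne_zero))
  have hsq : (x / 2) ^ 2 < sinh (x / 2) ^ 2 := sq_lt_sq.2 hsinh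
  have hcosh : cosh x = 1 + 2 * sinh (x / 2) ^ 2 := by
    rw [← mul_div_cancel₀ x two_ne_zero, cosh_two_mul, cosh_sq]
    ring_nf
  rw [hcosh]
  linarith

lemma exp_two_mul_sub_exp_mul_add_one_eq (x : ℝ) :
    exp (2 * x) - exp x * (x ^ 2 + 2) + 1 = 2 * exp x * (cosh x - (1 + x ^ 2 / 2)) := by
  rw [cosh_eq, exp_neg, two_mul, exp_add]
  field_simp
  ring

lemma exp_two_mul_sub_exp_mul_add_one_pos {x : ℝ} (hx : x ≠ 0) :
    0 < exp (2 * x) - exp x * (x ^ 2 + 2) + 1 := by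
  rw [exp_two_mul_sub_exp_mul_add_one_eq]
  have := one_add_sq_div_two_lt_cosh hx
  positivity

end Real

lemma hasDerivAt_log_exp_sub_one_div {t : ℝ} (ht : t ≠ 0) :
    HasDerivAt (fun s : ℝ => log ((exp s - 1) / s)) (exp t / (exp t - 1) - 1 / t) t := by
  have hne := exp_sub_one_ne_zero ht
  refine ((((hasDerivAt_exp t).sub_const 1).div (hasDerivAt_id' t) ht).log
    (div_ne_zero hne ht)).congr_deriv ?_
  simp only [Pi.div_apply]
  field_simp

lemma deriv_log_exp_sub_one_div_eventuallyEq {θ : ℝ} (hθ : θ ≠ 0) :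
    deriv (fun s : ℝ => log ((exp s - 1) / s)) =ᶠ[𝓝 θ] fun t => exp t / (exp t - 1) - 1 / t := by
  filter_upwards [isOpen_ne.mem_nhds hθ] with t ht
  exact (hasDerivAt_log_exp_sub_one_div ht).deriv

lemma hasDerivAt_exp_div_exp_sub_one_sub_one_div {θ : ℝ} (hθ : θ ≠ 0) :
    HasDerivAt (fun t : ℝ => exp t / (exp t - 1) - 1 / t)
      ((exp (2 * θ) - exp θ * (θ ^ 2 + 2) + 1) / ((exp θ - 1) ^ 2 * θ ^ 2)) θ := by
  have hne := exp_sub_one_ne_zero hθ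
  refine (((hasDerivAt_exp θ).div ((hasDerivAt_exp θ).sub_const 1) hne).sub
    ((hasDerivAt_const θ (1 : ℝ)).div (hasDerivAt_id' θ) hθ)).congr_deriv ?_
  rw [two_mul, exp_add]
  field_simp
  ring

/-- For `θ ≠ 0`, the second derivative of `log((e^θ-1)/θ)` equals
`(e^{2θ} - e^θ(θ²+2) + 1)/((e^θ-1)²θ²)`, and this quantity is strictly positive. -/
theorem second_deriv_log_mgf_uniform (θ : ℝ) (hθ : θ ≠ 0) :
    HasDerivAt (deriv fun t : ℝ => Real.log ((Real.exp t - 1) / t))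
      ((Real.exp (2 * θ) - Real.exp θ * (θ ^ 2 + 2) + 1) /
        ((Real.exp θ - 1) ^ 2 * θ ^ 2)) θ ∧
    0 < (Real.exp (2 * θ) - Real.exp θ * (θ ^ 2 + 2) + 1) /
        ((Real.exp θ - 1) ^ 2 * θ ^ 2) := by
  refine ⟨(hasDerivAt_exp_div_exp_sub_one_sub_one_div hθ).congr_of_eventuallyEq
    (deriv_log_exp_sub_one_div_eventuallyEq hθ), ?_⟩
  have hden : 0 < (exp θ - 1) ^ 2 * θ ^ 2 :=
    mul_pos (pow_two_pos_of_ne_zero (exp_sub_one_ne_zero hθ)) (pow_two_pos_of_ne_zero hθ)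
  exact div_pos (exp_two_mul_sub_exp_mul_add_one_pos hθ) hden
end

section
/- For p = 2, the Cramér function I of the uniform distribution on (0,1) satisfies: the function m(u) = I''(u)/4 attains its global minimum on (0,1) at u₀ = 1/2, with m(1/2) = 3. -/
/-!
The cumulant generating function `L = log M` of the uniform law is smooth with `L'' > 0`, and `I` is
its Legendre transform, so the inverse function theorem gives `I''(L'(θ)) = 1 / L''(θ)`, while `L'`
maps `ℝ` onto `(0, 1)`. It thus suffices that `L''` attains its maximum `1/12` at `θ = 0`, where
`L'(0) = 1/2`. Differentiating `θ M(θ) = e^θ - 1` repeatedly gives the moments `M⁽ⁿ⁾(0) = 1/(n+1)`,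
hence `L''(0) = 1/3 - 1/4`. For `θ = 2t ≠ 0` one finds `L''(θ) = (1/t² - 1/sinh² t) / 4`, and
`0 < 1/t² - 1/sinh² t ≤ 1/3` follows from `t < sinh t ≤ t cosh t` and `sinh t - t ≤ t² sinh t / 6`
for `t > 0`.
-/

open Real Set Filter Topology Function

theorem AnalyticOnNhd.dslope {𝕜 E : Type*} [NontriviallyNormedField 𝕜] [NormedAddCommGroup E]
    [NormedSpace 𝕜 E] {f : 𝕜 → E} {s : Set 𝕜} {a : 𝕜} (hf : AnalyticOnNhd 𝕜 f s) (ha : a ∈ s) :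
    AnalyticOnNhd 𝕜 (dslope f a) s := by
  intro x hx
  rcases eq_or_ne x a with rfl | hxa
  · obtain ⟨p, hp⟩ := hf x hx
    exact hp.has_fpower_series_dslope_fslope.analyticAt
  · refine AnalyticAt.congr ?_ (dslope_eventuallyEq_slope_of_ne f hxa).symm
    simp only [slope_fun_def]
    exact (((analyticAt_id).sub analyticAt_const).inv (sub_ne_zero.2 hxa)).smul
      ((hf x hx).sub analyticAt_const)

section Legendre

variable {L G H : ℝ → ℝ}

noncomputable def legendreTransform (L : ℝ → ℝ) (u : ℝ) : ℝ := ⨆ θ, θ * u - L θ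

theorem add_mul_sub_le_of_hasDerivAt_of_monotone (hL : ∀ θ, HasDerivAt L (G θ) θ)
    (hG : Monotone G) (θ₀ θ : ℝ) : L θ₀ + G θ₀ * (θ - θ₀) ≤ L θ := by
  have hconv : ConvexOn ℝ univ L :=
    Monotone.convexOn_univ_of_deriv (fun θ => (hL θ).differentiableAt)
      (by rwa [funext fun θ => (hL θ).deriv])
  rcases lt_trichotomy θ₀ θ with h | rfl | h
  · have := hconv.le_slope_of_hasDerivAt trivial trivial h (hL θ₀)
    rw [slope_def_field, le_div_iff₀ (sub_pos.2 h)] at this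
    linarith
  · simp
  · have := hconv.slope_le_of_hasDerivAt trivial trivial h (hL θ₀)
    rw [slope_def_field, div_le_iff₀ (sub_pos.2 h)] at this
    nlinarith

theorem legendreTransform_apply_of_hasDerivAt (hL : ∀ θ, HasDerivAt L (G θ) θ) (hG : Monotone G)
    (θ₀ : ℝ) : legendreTransform L (G θ₀) = θ₀ * G θ₀ - L θ₀ := by
  have hle : ∀ θ, θ * G θ₀ - L θ ≤ θ₀ * G θ₀ - L θ₀ := fun θ => by
    nlinarith [add_mul_sub_le_of_hasDerivAt_of_monotone hL hG θ₀ θ]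
  exact le_antisymm (ciSup_le hle) (le_ciSup ⟨_, forall_mem_range.2 hle⟩ θ₀)

theorem deriv_deriv_legendreTransform (hL : ∀ θ, HasDerivAt L (G θ) θ)
    (hG : ∀ θ, HasStrictDerivAt G (H θ) θ) (hH : ∀ θ, 0 < H θ) (θ₀ : ℝ) :
    deriv (deriv (legendreTransform L)) (G θ₀) = (H θ₀)⁻¹ := by
  have hmono : StrictMono G :=
    strictMono_of_deriv_pos fun θ => (hG θ).hasDerivAt.deriv ▸ hH θ
  set ψ := invFun G
  have hψG : LeftInverse ψ G := leftInverse_invFun hmono.injective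
  have hψ : ∀ θ, HasStrictDerivAt ψ (H θ)⁻¹ (G θ) := fun θ =>
    (hG θ).to_local_left_inverse (hH θ).ne' (Eventually.of_forall hψG)
  have hopen : IsOpen (range G) :=
    (isOpenMap_of_hasStrictDerivAt hG fun θ => (hH θ).ne').isOpen_range
  have hI : EqOn (legendreTransform L) (fun v => ψ v * v - L (ψ v)) (range G) := by
    rintro _ ⟨θ, rfl⟩
    simp only [legendreTransform_apply_of_hasDerivAt hL hmono.monotone, hψG θ]
  have hI' : EqOn (deriv (legendreTransform L)) ψ (range G) := by
    rintro _ ⟨θ, rfl⟩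
    have hJ : HasDerivAt (fun v => ψ v * v - L (ψ v)) θ (G θ) := by
      have := ((hψ θ).hasDerivAt.mul (hasDerivAt_id' _)).sub
        ((hL (ψ (G θ))).comp _ (hψ θ).hasDerivAt)
      rw [hψG θ] at this
      exact this.congr_deriv (by ring)
    rw [hψG θ]
    exact (hJ.congr_of_eventuallyEq (hI.eventuallyEq_of_mem (hopen.mem_nhds ⟨θ, rfl⟩))).deriv
  exact ((hψ θ₀).hasDerivAt.congr_of_eventuallyEq
    (hI'.eventuallyEq_of_mem (hopen.mem_nhds ⟨θ₀, rfl⟩))).deriv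

end Legendre

theorem nonneg_of_hasDerivAt_nonneg {f f' : ℝ → ℝ} (hf : ∀ x, HasDerivAt f (f' x) x)
    (hf' : ∀ x, 0 ≤ x → 0 ≤ f' x) (h0 : f 0 = 0) {t : ℝ} (ht : 0 ≤ t) : 0 ≤ f t := by
  have hmono : MonotoneOn f (Ici 0) :=
    monotoneOn_of_hasDerivWithinAt_nonneg (convex_Ici 0)
      (continuous_iff_continuousAt.2 fun x => (hf x).continuousAt).continuousOn
      (fun x _ => (hf x).hasDerivWithinAt) fun x hx => hf' x (interior_subset hx)
  simpa [h0] using hmono self_mem_Ici ht ht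

namespace Real

theorem sinh_le_mul_cosh {t : ℝ} (ht : 0 ≤ t) : sinh t ≤ t * cosh t := by
  have := nonneg_of_hasDerivAt_nonneg (f := fun t => t * cosh t - sinh t)
    (fun x => ((hasDerivAt_id x).mul (hasDerivAt_cosh x)).sub (hasDerivAt_sinh x))
    (fun x hx => by simp only [id]; nlinarith [sinh_nonneg_iff.2 hx]) (by simp) ht
  linarith

theorem sinh_sub_self_le {t : ℝ} (ht : 0 ≤ t) : sinh t - t ≤ t ^ 2 * sinh t / 6 := by
  have hderiv (x : ℝ) (hx : 0 ≤ x) : 0 ≤ 1 + x * sinh x / 3 + x ^ 2 * cosh x / 6 - cosh x :=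
    nonneg_of_hasDerivAt_nonneg (f := fun t => 1 + t * sinh t / 3 + t ^ 2 * cosh t / 6 - cosh t)
      (fun x => (((((hasDerivAt_id x).mul (hasDerivAt_sinh x)).div_const 3).const_add 1).add
        (((hasDerivAt_pow 2 x).mul (hasDerivAt_cosh x)).div_const 6)).sub (hasDerivAt_cosh x))
      (fun x hx => by
        simp only [id]
        nlinarith [sinh_le_mul_cosh hx, mul_nonneg (sq_nonneg x) (sinh_nonneg_iff.2 hx)])
      (by simp) hx
  have := nonneg_of_hasDerivAt_nonneg (f := fun t => t + t ^ 2 * sinh t / 6 - sinh t)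
    (fun x => ((hasDerivAt_id x).add
      (((hasDerivAt_pow 2 x).mul (hasDerivAt_sinh x)).div_const 6)).sub (hasDerivAt_sinh x))
    (fun x hx => by
      push_cast
      linarith [hderiv x hx])
    (by simp) ht
  linarith

theorem sq_lt_sinh_sq {t : ℝ} (ht : t ≠ 0) : t ^ 2 < sinh t ^ 2 := by
  rcases ht.lt_or_gt with h | h
  · nlinarith [sinh_lt_self_iff.2 h, sinh_neg_iff.2 h]
  · nlinarith [self_lt_sinh_iff.2 h]

theorem sinh_sq_sub_sq_le (t : ℝ) : sinh t ^ 2 - t ^ 2 ≤ t ^ 2 * sinh t ^ 2 / 3 := by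
  wlog ht : 0 ≤ t with H
  · simpa using H (-t) (by linarith)
  have h1 := sinh_sub_self_le ht
  have h2 : t ≤ sinh t := self_le_sinh_iff.2 ht
  nlinarith [mul_le_mul_of_nonneg_right h1 (by linarith : 0 ≤ sinh t + t),
    mul_nonneg (mul_nonneg (sq_nonneg t) (ht.trans h2)) (sub_nonneg.2 h2)]

theorem exp_sub_one_sq (x : ℝ) : (exp x - 1) ^ 2 = exp x * (2 * sinh (x / 2)) ^ 2 := by
  have hx : exp x = exp (x / 2) ^ 2 := by rw [← exp_nat_mul]; ring_nf
  rw [sinh_eq, exp_neg, hx]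
  field_simp

end Real

/-- `(e^θ - 1) / θ`, the moment generating function of the uniform law on `(0, 1)`; as a `dslope`
it is analytic, with the value `1` at `θ = 0`. -/
noncomputable def uniformMGF : ℝ → ℝ := dslope exp 0

noncomputable def uniformCGF (θ : ℝ) : ℝ := log (uniformMGF θ)

section Uniform

variable {θ : ℝ}

theorem uniformMGF_zero : uniformMGF 0 = 1 := by simp [uniformMGF]

theorem uniformMGF_of_ne (h : θ ≠ 0) : uniformMGF θ = (exp θ - 1) / θ := by
  simp [uniformMGF, dslope_of_ne _ h, slope_def_field]

theorem mul_uniformMGF (θ : ℝ) : θ * uniformMGF θ = exp θ - 1 := by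
  simpa [uniformMGF] using sub_smul_dslope exp 0 θ

theorem uniformMGF_pos (θ : ℝ) : 0 < uniformMGF θ := by
  have h := mul_uniformMGF θ
  rcases lt_trichotomy θ 0 with hθ | rfl | hθ
  · nlinarith [exp_lt_one_iff.2 hθ]
  · simp [uniformMGF_zero]
  · nlinarith [add_one_lt_exp hθ.ne']

theorem contDiff_uniformMGF {n : WithTop ℕ∞} : ContDiff ℝ n uniformMGF :=
  (analyticOnNhd_rexp.dslope (mem_univ 0)).contDiff

theorem hasDerivAt_iteratedDeriv_uniformMGF (n : ℕ) (θ : ℝ) :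
    HasDerivAt (iteratedDeriv n uniformMGF) (iteratedDeriv (n + 1) uniformMGF θ) θ := by
  rw [iteratedDeriv_succ]
  exact ((contDiff_uniformMGF (n := ⊤).differentiable_iteratedDeriv n
    (WithTop.coe_lt_top _)).differentiableAt).hasDerivAt

theorem hasDerivAt_uniformMGF (θ : ℝ) :
    HasDerivAt uniformMGF (iteratedDeriv 1 uniformMGF θ) θ := by
  simpa using hasDerivAt_iteratedDeriv_uniformMGF 0 θ

theorem iteratedDeriv_uniformMGF_recurrence (n : ℕ) (θ : ℝ) :
    (n + 1) * iteratedDeriv n uniformMGF θ + θ * iteratedDeriv (n + 1) uniformMGF θ = exp θ := by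
  induction n generalizing θ with
  | zero =>
    have h : HasDerivAt (fun x => x * uniformMGF x)
        (1 * uniformMGF θ + θ * iteratedDeriv 1 uniformMGF θ) θ :=
      (hasDerivAt_id θ).mul (hasDerivAt_uniformMGF θ)
    rw [funext mul_uniformMGF] at h
    simpa using (h.unique ((hasDerivAt_exp θ).sub_const 1))
  | succ n ih =>
    have h : HasDerivAt (fun x => (n + 1) * iteratedDeriv n uniformMGF x +
          x * iteratedDeriv (n + 1) uniformMGF x)
        ((n + 1) * iteratedDeriv (n + 1) uniformMGF θ +
          (1 * iteratedDeriv (n + 1) uniformMGF θ + θ * iteratedDeriv (n + 2) uniformMGF θ)) θ :=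
      ((hasDerivAt_iteratedDeriv_uniformMGF n θ).const_mul _).add
        ((hasDerivAt_id θ).mul (hasDerivAt_iteratedDeriv_uniformMGF (n + 1) θ))
    rw [funext ih] at h
    push_cast
    linarith [h.unique (hasDerivAt_exp θ)]

theorem iteratedDeriv_uniformMGF_zero (n : ℕ) : iteratedDeriv n uniformMGF 0 = 1 / (n + 1) := by
  have h := iteratedDeriv_uniformMGF_recurrence n 0
  rw [zero_mul, add_zero, exp_zero] at h
  field_simp
  linarith

theorem contDiff_uniformCGF {n : WithTop ℕ∞} : ContDiff ℝ n uniformCGF :=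
  contDiff_uniformMGF.log fun θ => (uniformMGF_pos θ).ne'

theorem deriv_uniformCGF (θ : ℝ) :
    deriv uniformCGF θ = iteratedDeriv 1 uniformMGF θ / uniformMGF θ :=
  ((hasDerivAt_iteratedDeriv_uniformMGF 0 θ).log (uniformMGF_pos θ).ne').deriv

theorem deriv_deriv_uniformCGF (θ : ℝ) :
    deriv (deriv uniformCGF) θ = (iteratedDeriv 2 uniformMGF θ * uniformMGF θ -
      iteratedDeriv 1 uniformMGF θ ^ 2) / uniformMGF θ ^ 2 := by
  rw [funext deriv_uniformCGF]
  have h : HasDerivAt (fun x => iteratedDeriv 1 uniformMGF x / uniformMGF x)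
      ((iteratedDeriv 2 uniformMGF θ * uniformMGF θ -
        iteratedDeriv 1 uniformMGF θ * iteratedDeriv 1 uniformMGF θ) / uniformMGF θ ^ 2) θ :=
    (hasDerivAt_iteratedDeriv_uniformMGF 1 θ).div (hasDerivAt_uniformMGF θ) (uniformMGF_pos θ).ne'
  rw [h.deriv]
  ring

theorem deriv_uniformCGF_zero : deriv uniformCGF 0 = 1 / 2 := by
  rw [deriv_uniformCGF, iteratedDeriv_uniformMGF_zero, uniformMGF_zero]
  norm_num

theorem deriv_deriv_uniformCGF_zero : deriv (deriv uniformCGF) 0 = 1 / 12 := by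
  rw [deriv_deriv_uniformCGF, iteratedDeriv_uniformMGF_zero, iteratedDeriv_uniformMGF_zero,
    uniformMGF_zero]
  norm_num

theorem iteratedDeriv_succ_uniformMGF_of_ne (h : θ ≠ 0) (n : ℕ) :
    iteratedDeriv (n + 1) uniformMGF θ = (exp θ - (n + 1) * iteratedDeriv n uniformMGF θ) / θ := by
  rw [eq_div_iff h]
  linarith [iteratedDeriv_uniformMGF_recurrence n θ]

theorem deriv_uniformCGF_of_ne (h : θ ≠ 0) :
    deriv uniformCGF θ = exp θ / (exp θ - 1) - 1 / θ := by
  have he : exp θ - 1 ≠ 0 := sub_ne_zero.2 (mt (exp_eq_one_iff θ).1 h)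
  rw [deriv_uniformCGF, iteratedDeriv_succ_uniformMGF_of_ne h, iteratedDeriv_zero,
    uniformMGF_of_ne h]
  field_simp
  ring

theorem deriv_deriv_uniformCGF_of_ne (h : θ ≠ 0) :
    deriv (deriv uniformCGF) θ = 1 / θ ^ 2 - 1 / (2 * sinh (θ / 2)) ^ 2 := by
  have he : exp θ - 1 ≠ 0 := sub_ne_zero.2 (mt (exp_eq_one_iff θ).1 h)
  have hs : 1 / (2 * sinh (θ / 2)) ^ 2 = exp θ / (exp θ - 1) ^ 2 := by
    rw [exp_sub_one_sq]
    field_simp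
  rw [hs, deriv_deriv_uniformCGF, iteratedDeriv_succ_uniformMGF_of_ne h 1,
    iteratedDeriv_succ_uniformMGF_of_ne h 0, iteratedDeriv_zero, uniformMGF_of_ne h]
  field_simp
  ring

theorem deriv_deriv_uniformCGF_pos (θ : ℝ) : 0 < deriv (deriv uniformCGF) θ := by
  rcases eq_or_ne θ 0 with rfl | h
  · rw [deriv_deriv_uniformCGF_zero]
    norm_num
  rw [deriv_deriv_uniformCGF_of_ne h, sub_pos]
  have := sq_lt_sinh_sq (div_ne_zero h two_ne_zero)
  exact one_div_lt_one_div_of_lt (by positivity) (by nlinarith)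

theorem deriv_deriv_uniformCGF_le (θ : ℝ) : deriv (deriv uniformCGF) θ ≤ 1 / 12 := by
  rcases eq_or_ne θ 0 with rfl | h
  · rw [deriv_deriv_uniformCGF_zero]
  obtain ⟨t, rfl⟩ : ∃ t, θ = 2 * t := ⟨θ / 2, by ring⟩
  have ht : t ≠ 0 := right_ne_zero_of_mul h
  have hs : sinh t ≠ 0 := sinh_eq_zero.not.2 ht
  rw [deriv_deriv_uniformCGF_of_ne h, mul_div_cancel_left₀ t two_ne_zero,
    div_sub_div _ _ (by positivity) (by positivity), div_le_div_iff₀ (by positivity) (by norm_num)]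
  nlinarith [sinh_sq_sub_sq_le t]

theorem Ioo_subset_range_deriv_uniformCGF : Ioo 0 1 ⊆ range (deriv uniformCGF) := by
  rintro u ⟨hu0, hu1⟩
  refine intermediate_value_univ (-1 / u) (1 / (1 - u))
    (contDiff_uniformCGF.continuous_deriv (n := 1) le_rfl) ⟨?_, ?_⟩
  · have ha : -1 / u < 0 := div_neg_of_neg_of_pos (by norm_num) hu0
    rw [deriv_uniformCGF_of_ne ha.ne, show 1 / (-1 / u) = -u by field_simp]
    have : exp (-1 / u) / (exp (-1 / u) - 1) < 0 :=
      div_neg_of_pos_of_neg (exp_pos _) (sub_neg.2 (exp_lt_one_iff.2 ha))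
    linarith
  · have hb : 0 < 1 / (1 - u) := by simpa using hu1
    rw [deriv_uniformCGF_of_ne hb.ne', one_div_one_div]
    have : 1 < exp (1 / (1 - u)) / (exp (1 / (1 - u)) - 1) :=
      (one_lt_div (sub_pos.2 (one_lt_exp_iff.2 hb))).2 (sub_lt_self _ one_pos)
    linarith

end Uniform

/-- For `p = 2`, with `I` the Cramér rate function of the uniform distribution on (0,1),
the function `m(u) = I''(u)/4` attains its global minimum on `(0,1)` at `u₀ = 1/2`,
with `m(1/2) = 3`. -/
theorem m_min_at_half
    (M : ℝ → ℝ) (hM : ∀ θ : ℝ, M θ = if θ = 0 then 1 else (Real.exp θ - 1) / θ)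
    (I : ℝ → ℝ) (hI : ∀ u : ℝ, I u = ⨆ θ : ℝ, (θ * u - Real.log (M θ)))
    (m : ℝ → ℝ) (hm : ∀ u : ℝ, m u = deriv (deriv I) u / 4) :
    (∀ u ∈ Set.Ioo (0:ℝ) 1, m (1/2) ≤ m u) ∧ m (1/2) = 3 := by
  have hMeq : M = uniformMGF := funext fun θ => by
    rw [hM]
    split_ifs with h
    · rw [h, uniformMGF_zero]
    · rw [uniformMGF_of_ne h]
  have hIeq : I = legendreTransform uniformCGF := funext fun u => by
    rw [hI, hMeq]
    rfl
  have hm_deriv : ∀ θ, m (deriv uniformCGF θ) = (deriv (deriv uniformCGF) θ)⁻¹ / 4 := fun θ => by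
    rw [hm, hIeq, deriv_deriv_legendreTransform
      (fun θ => (contDiff_uniformCGF.differentiable (n := 1) one_ne_zero θ).hasDerivAt)
      (fun θ => (contDiff_uniformCGF.deriv' (n := 1)).contDiffAt.hasStrictDerivAt one_ne_zero)
      deriv_deriv_uniformCGF_pos]
  have hhalf : m (1 / 2) = 3 := by
    rw [← deriv_uniformCGF_zero, hm_deriv, deriv_deriv_uniformCGF_zero]
    norm_num
  refine ⟨fun u hu => ?_, hhalf⟩
  obtain ⟨θ, rfl⟩ := Ioo_subset_range_deriv_uniformCGF hu
  have h12 : 12 ≤ (deriv (deriv uniformCGF) θ)⁻¹ := by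
    rw [le_inv_comm₀ (by norm_num) (deriv_deriv_uniformCGF_pos θ)]
    linarith [deriv_deriv_uniformCGF_le θ]
  rw [hhalf, hm_deriv]
  linarith
end

section
/- The second derivative of log((e^θ−1)/θ), namely n₀(θ) = (e^{2θ} − e^θ(θ²+2) + 1)/((e^θ−1)²θ²), attains its global maximum over ℝ at θ = 0, where its value (by continuous extension) is 1/12. -/
open Real

/-- General quadratic-times-exponential form. -/
noncomputable def Paux (a b c d e f g h i x : ℝ) : ℝ :=
  (a*x^2+b*x+c)*Real.exp x^2 + (d*x^2+e*x+f)*Real.exp x + (g*x^2+h*x+i)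

lemma hasDerivAt_Paux (a b c d e f g h i θ : ℝ) :
    HasDerivAt (fun x => Paux a b c d e f g h i x)
      (Paux (2*a) (2*a+2*b) (b+2*c) d (2*d+e) (e+f) 0 (2*g) h θ) θ := by
  have hexp := Real.hasDerivAt_exp θ
  have h1 : HasDerivAt (fun x : ℝ => (a*x^2+b*x+c)*Real.exp x^2)
      ((2*a*θ+b)*Real.exp θ^2 + (a*θ^2+b*θ+c)*(2*Real.exp θ*Real.exp θ)) θ := by
    have hp : HasDerivAt (fun x : ℝ => a*x^2+b*x+c) (2*a*θ+b) θ := by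
      have : HasDerivAt (fun x : ℝ => a*x^2+b*x+c) (a*(2*θ)+b) θ := by
        exact (((hasDerivAt_pow 2 θ).const_mul a).add ((hasDerivAt_id θ).const_mul b)).add_const c
          |>.congr_deriv (by ring)
      exact this.congr_deriv (by ring)
    have hsq : HasDerivAt (fun x : ℝ => Real.exp x^2) (2*Real.exp θ*Real.exp θ) θ := by
      have := (hexp.mul hexp)
      have h2 : HasDerivAt (fun x : ℝ => Real.exp x * Real.exp x)
          (Real.exp θ * Real.exp θ + Real.exp θ * Real.exp θ) θ := hexp.mul hexp
      have h3 : HasDerivAt (fun x : ℝ => Real.exp x^2)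
          (Real.exp θ * Real.exp θ + Real.exp θ * Real.exp θ) θ := by
        simpa [pow_two] using h2
      exact h3.congr_deriv (by ring)
    exact hp.mul hsq
  have h2 : HasDerivAt (fun x : ℝ => (d*x^2+e*x+f)*Real.exp x)
      ((2*d*θ+e)*Real.exp θ + (d*θ^2+e*θ+f)*Real.exp θ) θ := by
    have hq : HasDerivAt (fun x : ℝ => d*x^2+e*x+f) (2*d*θ+e) θ := by
      have : HasDerivAt (fun x : ℝ => d*x^2+e*x+f) (d*(2*θ)+e) θ :=
        (((hasDerivAt_pow 2 θ).const_mul d).add ((hasDerivAt_id θ).const_mul e)).add_const f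
          |>.congr_deriv (by ring)
      exact this.congr_deriv (by ring)
    exact hq.mul hexp
  have h3 : HasDerivAt (fun x : ℝ => g*x^2+h*x+i) (2*g*θ+h) θ := by
    have : HasDerivAt (fun x : ℝ => g*x^2+h*x+i) (g*(2*θ)+h) θ :=
      (((hasDerivAt_pow 2 θ).const_mul g).add ((hasDerivAt_id θ).const_mul h)).add_const i
        |>.congr_deriv (by ring)
    exact this.congr_deriv (by ring)
  have := (h1.add h2).add h3
  unfold Paux
  exact this.congr_deriv (by ring)

lemma nonneg_chain (f f' : ℝ → ℝ) (hd : ∀ x, HasDerivAt f (f' x) x)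
    (h0 : f 0 = 0) (hf' : ∀ x, 0 ≤ x → 0 ≤ f' x) :
    ∀ x, 0 ≤ x → 0 ≤ f x := by
  intro x hx
  have hm : MonotoneOn f (Set.Ici (0:ℝ)) := by
    apply monotoneOn_of_deriv_nonneg (convex_Ici 0)
      (fun y _ => (hd y).continuousAt.continuousWithinAt)
      (fun y _ => (hd y).differentiableAt.differentiableWithinAt)
    intro y hy
    rw [(hd y).deriv]
    rw [interior_Ici] at hy
    exact hf' y (le_of_lt hy)
  calc (0:ℝ) = f 0 := h0.symm
    _ ≤ f x := hm Set.self_mem_Ici hx hx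

/-- The key inequality: `(θ²-12)e^{2θ} + (10θ²+24)e^θ + θ² - 12 ≥ 0`. -/
lemma F0_nonneg (θ : ℝ) : 0 ≤ Paux 1 0 (-12) 10 0 24 1 0 (-12) θ := by
  -- chain of derivatives
  have hG' : ∀ x : ℝ, 0 ≤ x → 0 ≤ Paux 0 0 0 64 512 96 0 20 120 x := by
    intro x hx
    unfold Paux
    nlinarith [Real.add_one_le_exp x, sq_nonneg x, Real.exp_pos x]
  have hG : ∀ x : ℝ, 0 ≤ x → (36:ℝ) ≤ Paux 0 0 0 64 384 (-288) 10 120 324 x := by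
    intro x hx
    have hd : ∀ y : ℝ, HasDerivAt (fun z => Paux 0 0 0 64 384 (-288) 10 120 324 z)
        (Paux 0 0 0 64 512 96 0 20 120 y) y := by
      intro y
      have := hasDerivAt_Paux 0 0 0 64 384 (-288) 10 120 324 y
      norm_num at this ⊢
      convert this using 2 <;> norm_num
    have := nonneg_chain (fun z => Paux 0 0 0 64 384 (-288) 10 120 324 z - 36)
      (fun z => Paux 0 0 0 64 512 96 0 20 120 z)
      (fun y => (hd y).sub_const 36)
      (by unfold Paux; norm_num) hG' x hx
    linarith
  have hF6 : ∀ x : ℝ, 0 ≤ x → 0 ≤ Paux 64 384 (-288) 10 120 324 0 0 0 x := by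
    intro x hx
    have h1 := hG x hx
    have hE : 0 < Real.exp x := Real.exp_pos x
    have key : Paux 64 384 (-288) 10 120 324 0 0 0 x
        = Real.exp x * Paux 0 0 0 64 384 (-288) 10 120 324 x := by
      unfold Paux; ring
    rw [key]
    nlinarith
  -- now descend F5 → F0
  have step : ∀ (a b c d e f g h i : ℝ),
      Paux a b c d e f g h i 0 = 0 →
      (∀ x, 0 ≤ x → 0 ≤ Paux (2*a) (2*a+2*b) (b+2*c) d (2*d+e) (e+f) 0 (2*g) h x) →
      ∀ x, 0 ≤ x → 0 ≤ Paux a b c d e f g h i x := by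
    intro a b c d e f g h i h0 hnext
    exact nonneg_chain _ _ (fun y => hasDerivAt_Paux a b c d e f g h i y) h0 hnext
  have hF5 : ∀ x : ℝ, 0 ≤ x → 0 ≤ Paux 32 160 (-224) 10 100 224 0 0 0 x := by
    apply step
    · unfold Paux; norm_num
    · intro x hx; have := hF6 x hx; convert this using 2 <;> norm_num
  have hF4 : ∀ x : ℝ, 0 ≤ x → 0 ≤ Paux 16 64 (-144) 10 80 144 0 0 0 x := by
    apply step
    · unfold Paux; norm_num
    · intro x hx; have := hF5 x hx; convert this using 2 <;> norm_num
  have hF3 : ∀ x : ℝ, 0 ≤ x → 0 ≤ Paux 8 24 (-84) 10 60 84 0 0 0 x := by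
    apply step
    · unfold Paux; norm_num
    · intro x hx; have := hF4 x hx; convert this using 2 <;> norm_num
  have hF2 : ∀ x : ℝ, 0 ≤ x → 0 ≤ Paux 4 8 (-46) 10 40 44 0 0 2 x := by
    apply step
    · unfold Paux; norm_num
    · intro x hx; have := hF3 x hx; convert this using 2 <;> norm_num
  have hF1 : ∀ x : ℝ, 0 ≤ x → 0 ≤ Paux 2 2 (-24) 10 20 24 0 2 0 x := by
    apply step
    · unfold Paux; norm_num
    · intro x hx; have := hF2 x hx; convert this using 2 <;> norm_num
  have hF0 : ∀ x : ℝ, 0 ≤ x → 0 ≤ Paux 1 0 (-12) 10 0 24 1 0 (-12) x := by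
    apply step
    · unfold Paux; norm_num
    · intro x hx; have := hF1 x hx; convert this using 2 <;> norm_num
  -- symmetry for negative θ
  rcases le_or_gt 0 θ with hθ | hθ
  · exact hF0 θ hθ
  · have hpos := hF0 (-θ) (by linarith)
    have hE : Real.exp θ ≠ 0 := Real.exp_ne_zero θ
    have hsym : Paux 1 0 (-12) 10 0 24 1 0 (-12) θ
        = Real.exp θ ^ 2 * Paux 1 0 (-12) 10 0 24 1 0 (-12) (-θ) := by
      unfold Paux
      rw [Real.exp_neg]
      field_simp
      ring
    rw [hsym]
    positivity

/-- The second derivative of `log((e^θ-1)/θ)`, namely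
`n₀(θ) = (e^{2θ} - e^θ(θ²+2) + 1)/((e^θ-1)²θ²)` (continuously extended by `1/12` at
`θ = 0`), attains its global maximum over `ℝ` at `θ = 0`, with value `1/12`. -/
theorem n0_max_at_zero
    (n₀ : ℝ → ℝ)
    (hn₀ : ∀ θ : ℝ, n₀ θ = if θ = 0 then 1/12 else
      (Real.exp (2 * θ) - Real.exp θ * (θ ^ 2 + 2) + 1) /
        ((Real.exp θ - 1) ^ 2 * θ ^ 2)) :
    (∀ θ : ℝ, n₀ θ ≤ n₀ 0) ∧ n₀ 0 = 1/12 := by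
  have h0 : n₀ 0 = 1/12 := by rw [hn₀]; simp
  refine ⟨fun θ => ?_, h0⟩
  rcases eq_or_ne θ 0 with rfl | hθ
  · exact le_refl _
  · rw [hn₀ θ, if_neg hθ, h0]
    have hB : 0 < (Real.exp θ - 1) ^ 2 * θ ^ 2 := by
      have h1 : Real.exp θ ≠ 1 := by
        intro h
        exact hθ (Real.exp_eq_exp.mp (by rw [h, Real.exp_zero]))
      have h2 : Real.exp θ - 1 ≠ 0 := sub_ne_zero.mpr h1
      positivity
    rw [div_le_div_iff₀ hB (by norm_num : (0:ℝ) < 12)]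
    have hF := F0_nonneg θ
    unfold Paux at hF
    have h2θ : Real.exp (2*θ) = Real.exp θ ^ 2 := by
      rw [two_mul, Real.exp_add, pow_two]
    rw [h2θ]
    nlinarith [hF]
end
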